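/- Let G be a group and let a, b be elements of G satisfying the braid relation a*b*a = b*a*b, and set c = a⁻¹*b*a. Then the element a²*c³*b⁵ is conjugate in G to (b*a)⁵. (This is the paper's computation, in Example 1, showing that the open book on the Poincaré homology sphere Σ(2,3,5) with punctured-torus page and monodromy t_a² t_c³ t_b⁵ is isomorphic to the one with monodromy (t_b t_a)⁵.) -/
import Mathlib


/-- Example 1 of Etnyre–Ozbagci, "Open books and plumbings":
if `a`, `b` satisfy the braid relation and `c = a⁻¹ * b * a`, then
`a² * c³ * b⁵` is conjugate to `(b * a)⁵`. -/
theorem stmt0 {G : Type*} [Group G] (a b : G)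
    (hbraid : a * b * a = b * a * b) (c : G) (hc : c = a⁻¹ * b * a) :
    ∃ g : G, g * (a ^ 2 * c ^ 3 * b ^ 5) * g⁻¹ = (b * a) ^ 5 := by
  subst hc
  have hb0 : a * (b * a) = b * (a * b) := by
    rw [← mul_assoc, hbraid, mul_assoc]
  have hb1 : ∀ x : G, a * (b * (a * x)) = b * (a * (b * x)) := by
    intro x
    simp only [← mul_assoc]
    rw [hbraid]
  have key : a*(b*(b*(a*(b*(b*(b*(b*(b*(a*b))))))))) =
      b*(a*(b*(a*(b*(a*(b*(a*(b*(a*a))))))))) := by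
    rw [← hb1]
    rw [hb1]
    nth_rewrite 2 [← hb1]
    rw [← hb0]
    nth_rewrite 4 [← hb1]
    rfl
  refine ⟨a * b⁻¹ * a⁻¹, ?_⟩
  have goal_eq : (a * b⁻¹ * a⁻¹) * (a ^ 2 * (a⁻¹ * b * a) ^ 3 * b ^ 5) *
      (a * b⁻¹ * a⁻¹)⁻¹ =
      a*(b*(b*(a*(b*(b*(b*(b*(b*(a*b))))))))) * a⁻¹ := by
      simp only [pow_succ, pow_zero, one_mul]
      group
  rw [goal_eq, key]
  simp only [pow_succ, pow_zero, one_mul, mul_assoc, mul_inv_cancel_right, mul_inv_cancel,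
    mul_one]
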